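/- Let q be an integer-valued quadratic form on ℤ^{n+1}, let ξ ∈ ℝ^{n+1} with ‖ξ‖ = 1 and q_ℝ(ξ) = 0. Then there exists b > 0 such that every x ∈ ℤ^{n+1} with q(x) ≠ 0 satisfies ‖x ∧ ξ‖ ≥ b/‖x‖. -/

import Mathlib

open RealInnerProductSpace

/-- The real vector associated to an integer vector. -/
def intCastR (n : ℕ) (v : Fin (n + 1) → ℤ) : EuclideanSpace ℝ (Fin (n + 1)) :=
  WithLp.toLp 2 (fun i => (v i : ℝ))

/-- Let `q` be a quadratic form on `ℝ^{n+1}` taking integer values on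
`ℤ^{n+1}` and let `ξ` be a unit vector with `q ξ = 0`.  Then there exists `b > 0` such
that every `x ∈ ℤ^{n+1}` with `q x ≠ 0` satisfies `‖x ∧ ξ‖ ≥ b / ‖x‖`. -/
theorem stmt17 (n : ℕ) (q : QuadraticForm ℝ (EuclideanSpace ℝ (Fin (n + 1))))
    (hint : ∀ v : Fin (n + 1) → ℤ, ∃ k : ℤ, q (intCastR n v) = (k : ℝ))
    (ξ : EuclideanSpace ℝ (Fin (n + 1))) (hξ : ‖ξ‖ = 1) (hq0 : q ξ = 0) :
    ∃ b : ℝ, 0 < b ∧ ∀ x : Fin (n + 1) → ℤ, q (intCastR n x) ≠ 0 →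
      Real.sqrt (‖intCastR n x‖ ^ 2 * ‖ξ‖ ^ 2 - ⟪intCastR n x, ξ⟫ ^ 2) ≥
        b / ‖intCastR n x‖ := by
  set B : EuclideanSpace ℝ (Fin (n + 1)) →ₗ[ℝ] EuclideanSpace ℝ (Fin (n + 1)) →ₗ[ℝ] ℝ :=
    QuadraticMap.associatedHom ℝ q with hB
  have hBq : ∀ y, B y y = q y := fun y => QuadraticMap.associated_eq_self_apply ℝ q y
  clear_value B
  obtain ⟨M, hM⟩ : ∃ M : ℝ, ∀ u v, |B u v| ≤ M * ‖u‖ * ‖v‖ := by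
    let F : EuclideanSpace ℝ (Fin (n + 1)) →L[ℝ] EuclideanSpace ℝ (Fin (n + 1)) →L[ℝ] ℝ :=
      LinearMap.toContinuousLinearMap
        ((LinearMap.toContinuousLinearMap : _ ≃ₗ[ℝ] _).toLinearMap.comp B)
    refine ⟨‖F‖, fun u v => ?_⟩
    have h1 := (F u).le_opNorm v
    have h2 := F.le_opNorm u
    have he : F u v = B u v := rfl
    rw [← he]
    calc |F u v| = ‖F u v‖ := rfl
      _ ≤ ‖F u‖ * ‖v‖ := h1
      _ ≤ ‖F‖ * ‖u‖ * ‖v‖ := by nlinarith only [h1, h2, norm_nonneg v, norm_nonneg (F u), norm_nonneg u, norm_nonneg F]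
  set M' : ℝ := max M 1 with hM'
  have hM'1 : (1:ℝ) ≤ M' := le_max_right _ _
  have hM'0 : (0:ℝ) < M' := lt_of_lt_of_le one_pos hM'1
  have hMM' : M ≤ M' := le_max_left _ _
  clear_value M'
  refine ⟨1 / (3 * M'), by positivity, fun x hx => ?_⟩
  set X : EuclideanSpace ℝ (Fin (n + 1)) := intCastR n x with hX
  have hX0 : X ≠ 0 := fun h => hx (by rw [h, map_zero])
  have hXn : (0:ℝ) < ‖X‖ := norm_pos_iff.mpr hX0
  obtain ⟨k, hk⟩ := hint x
  rw [← hX] at hk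
  clear_value X
  set t : ℝ := ⟪X, ξ⟫ with ht
  clear_value t
  set w : EuclideanSpace ℝ (Fin (n + 1)) := X - t • ξ with hw
  have hw2 : ‖w‖ ^ 2 = ‖X‖ ^ 2 - t ^ 2 := by
    rw [hw, norm_sub_sq_real, real_inner_smul_right, norm_smul, hξ, ← ht]
    simp [Real.norm_eq_abs, sq_abs]
    ring
  clear_value w
  have hwle : ‖w‖ ≤ ‖X‖ := by
    nlinarith only [hw2, norm_nonneg w, norm_nonneg X, sq_nonneg t]
  have htle : |t| ≤ ‖X‖ := by
    have h := abs_real_inner_le_norm X ξ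
    rw [hξ, mul_one] at h
    rw [ht]; exact h
  have hsqrt : Real.sqrt (‖X‖ ^ 2 * ‖ξ‖ ^ 2 - t ^ 2) = ‖w‖ := by
    rw [hξ, one_pow, mul_one, ← hw2, Real.sqrt_sq (norm_nonneg w)]
  rw [hsqrt]
  have hk0 : k ≠ 0 := by
    intro h; rw [h] at hk; exact hx (by simpa using hk)
  have h1le : (1:ℝ) ≤ |q X| := by
    rw [hk]
    exact_mod_cast Int.one_le_abs hk0
  have hXdec : X = t • ξ + w := by rw [hw]; abel
  have hexp : q X = t * t * B ξ ξ + t * B ξ w + t * B w ξ + B w w := by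
    rw [← hBq, hXdec]
    simp only [map_add, map_smul, LinearMap.add_apply, LinearMap.smul_apply, smul_eq_mul]
    ring
  have hBξξ : B ξ ξ = 0 := by rw [hBq, hq0]
  have hub : |q X| ≤ 3 * M' * ‖X‖ * ‖w‖ := by
    rw [hexp, hBξξ, mul_zero, zero_add]
    have h1 : |t * B ξ w| ≤ M' * ‖X‖ * ‖w‖ := by
      rw [abs_mul]
      have hm := hM ξ w
      rw [hξ] at hm
      have hb : |B ξ w| ≤ M' * ‖w‖ := by nlinarith only [hm, hMM', norm_nonneg w]
      calc |t| * |B ξ w| ≤ ‖X‖ * (M' * ‖w‖) :=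
            mul_le_mul htle hb (abs_nonneg _) hXn.le
        _ = M' * ‖X‖ * ‖w‖ := by ring
    have h2 : |t * B w ξ| ≤ M' * ‖X‖ * ‖w‖ := by
      rw [abs_mul]
      have hm := hM w ξ
      rw [hξ] at hm
      have hb : |B w ξ| ≤ M' * ‖w‖ := by nlinarith only [hm, hMM', norm_nonneg w]
      calc |t| * |B w ξ| ≤ ‖X‖ * (M' * ‖w‖) :=
            mul_le_mul htle hb (abs_nonneg _) hXn.le
        _ = M' * ‖X‖ * ‖w‖ := by ring
    have h3 : |B w w| ≤ M' * ‖X‖ * ‖w‖ := by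
      have hm := hM w w
      nlinarith only [hm, mul_nonneg (mul_nonneg (sub_nonneg.2 hMM') (norm_nonneg w)) (norm_nonneg w),
        mul_nonneg (mul_nonneg hM'0.le (sub_nonneg.2 hwle)) (norm_nonneg w)]
    calc |t * B ξ w + t * B w ξ + B w w|
        ≤ |t * B ξ w| + |t * B w ξ| + |B w w| :=
          (abs_add_le _ _).trans (add_le_add_left (abs_add_le _ _) _)
      _ ≤ 3 * M' * ‖X‖ * ‖w‖ := by linarith
  have key : 1 ≤ 3 * M' * ‖X‖ * ‖w‖ := le_trans h1le hub
  rw [ge_iff_le, div_div, div_le_iff₀ (by positivity : (0:ℝ) < 3 * M' * ‖X‖)]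
  nlinarith only [key]
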